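/- arXiv:1508.06754 — 2 statements merged into one kernel-verified Lean document; each statement's English description precedes it below -/
import Mathlib

section
/- For every N ≥ 2, the word 0·rev(f_5)·rev(f_7)⋯rev(f_{2N+1}) (the letter 0 followed by the concatenation of the reversals of the odd-indexed finite Fibonacci words) is a prefix of the Fibonacci infinite word f. In other words, f = 0·∏_{n≥2} rev(f_{2n+1}). -/
/-!
Write `f (n+3) = c n · d n`, where `d n` is `01` or `10` according to the parity of `n` and the
central words satisfy `c (n+2) = c (n+1) · d (n+1) · c n`. The central words are palindromes and
also satisfy `c (n+2) = c n · d n · c (n+1)`. Hence `rev f (2k+5) = d (2k+1) · c (2k+2)`, so by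
induction `0 · rev f_5 ⋯ rev f_(2k+3) = c (2k+1)`, which is a prefix of `f (2k+4)`.
-/

/-- The finite Fibonacci words over the alphabet {0,1}: f 1 = 1, f 2 = 0,
and f n = f (n-1) ++ f (n-2) for n ≥ 3. -/
def fibWord : ℕ → List ℕ
  | 0 => []
  | 1 => [1]
  | 2 => [0]
  | n + 3 => fibWord (n + 2) ++ fibWord (n + 1)

/-- A finite word is a prefix of the Fibonacci infinite word iff it is a
prefix of some finite Fibonacci word f m with m ≥ 2. -/
def IsFibPrefix (x : List ℕ) : Prop := ∃ m, 2 ≤ m ∧ x <+: fibWord m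

def letterPair (n : ℕ) : List ℕ := if n % 2 = 0 then [0, 1] else [1, 0]

def centralWord : ℕ → List ℕ
  | 0 => []
  | 1 => [0]
  | n + 2 => centralWord (n + 1) ++ letterPair (n + 1) ++ centralWord n

lemma letterPair_add_two (n : ℕ) : letterPair (n + 2) = letterPair n := by
  simp [letterPair]

lemma reverse_letterPair (n : ℕ) : (letterPair n).reverse = letterPair (n + 1) := by
  rcases Nat.mod_two_eq_zero_or_one n with h | h <;> simp [letterPair, h, Nat.add_mod]

lemma fibWord_add_three (n : ℕ) : fibWord (n + 3) = centralWord n ++ letterPair n := by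
  induction n using Nat.twoStepInduction with
  | zero => rfl
  | one => rfl
  | more n ih₁ ih₂ =>
    rw [fibWord, ih₂, ih₁, centralWord, letterPair_add_two]
    simp only [List.append_assoc]

lemma centralWord_add_two' (n : ℕ) :
    centralWord (n + 2) = centralWord n ++ letterPair n ++ centralWord (n + 1) := by
  induction n with
  | zero => rfl
  | succ n ih =>
    calc centralWord (n + 3)
        = centralWord (n + 1) ++ letterPair (n + 1) ++
            (centralWord n ++ letterPair n ++ centralWord (n + 1)) := by
          rw [centralWord.eq_3 (n + 1), centralWord.eq_3 n, letterPair_add_two]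
          simp only [List.append_assoc]
      _ = centralWord (n + 1) ++ letterPair (n + 1) ++ centralWord (n + 2) := by rw [ih]

lemma reverse_centralWord (n : ℕ) : (centralWord n).reverse = centralWord n := by
  induction n using Nat.twoStepInduction with
  | zero => rfl
  | one => rfl
  | more n ih₁ ih₂ =>
    conv_lhs => rw [centralWord]
    rw [List.reverse_append, List.reverse_append, ih₁, ih₂, reverse_letterPair,
      letterPair_add_two, centralWord_add_two', List.append_assoc]

lemma reverse_fibWord_add_three (n : ℕ) :
    (fibWord (n + 3)).reverse = letterPair (n + 1) ++ centralWord n := by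
  rw [fibWord_add_three, List.reverse_append, reverse_letterPair, reverse_centralWord]

lemma zero_append_flatten_reverse_fibWord (k : ℕ) :
    [0] ++ ((List.range k).map (fun i => (fibWord (2 * (i + 2) + 1)).reverse)).flatten
      = centralWord (2 * k + 1) := by
  induction k with
  | zero => rfl
  | succ k ih =>
    have hrev : (fibWord (2 * (k + 2) + 1)).reverse
        = letterPair (2 * k + 1) ++ centralWord (2 * k + 2) := by
      rw [show 2 * (k + 2) + 1 = 2 * k + 2 + 3 by ring, reverse_fibWord_add_three,
        letterPair_add_two]
    rw [List.range_succ, List.map_append, List.flatten_append, ← List.append_assoc, ih,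
      List.map_singleton, List.flatten_singleton, hrev, ← List.append_assoc,
      ← centralWord_add_two']
    rfl

theorem stmt18_general (N : ℕ) :
    IsFibPrefix ([0] ++
      ((List.range (N - 1)).map (fun i => (fibWord (2 * (i + 2) + 1)).reverse)).flatten) := by
  refine ⟨2 * (N - 1) + 4, by omega, ?_⟩
  rw [zero_append_flatten_reverse_fibWord, fibWord_add_three]
  exact List.prefix_append _ _

theorem stmt18 (N : ℕ) (hN : 2 ≤ N) :
    IsFibPrefix ([0] ++
      ((List.range (N - 1)).map (fun i => (fibWord (2 * (i + 2) + 1)).reverse)).flatten) :=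
  stmt18_general N
end

section
/- For every N ≥ 2, the word 01·∏_{n=2}^{N}(rev(f_n)·rev(f_n)) (the word 01 followed by the concatenation of the squares of the reversals of the finite Fibonacci words) is a prefix of the Fibonacci infinite word f. In other words, f = 01·∏_{n≥2} rev(f_n)². -/
/-!
Write `f_n = p_n t_n` for `n ≥ 3`, where `t_n` is `01` or `10` according to the parity of `n`.
The words `p_n` are palindromes, and `f_n f_{n+1}` differs from `f_{n+1} f_n` only in its last
two letters: `f_n p_{n+1} t_n = f_{n+1} f_n`. Since `rev t_n = t_{n+1}`, we get
`rev f_{n+1} = t_n p_{n+1}`, and by induction `01 · ∏_{n=2}^{N} rev(f_n)² · t_N = f_{N+3} f_N`,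
which is a prefix of `f_{N+3} f_{N+2} = f_{N+4}`.
-/

def fibTail (n : ℕ) : List ℕ := if n % 2 = 0 then [1, 0] else [0, 1]

lemma fibTail_add_two (n : ℕ) : fibTail (n + 2) = fibTail n := by
  simp [fibTail]

lemma reverse_fibTail (n : ℕ) : (fibTail n).reverse = fibTail (n + 1) := by
  unfold fibTail
  rcases Nat.mod_two_eq_zero_or_one n with h | h <;> simp [h, Nat.add_mod]

/-- `fibPal k` is `fibWord (k + 3)` without its last two letters. -/
def fibPal : ℕ → List ℕ
  | 0 => []
  | 1 => [0]
  | k + 2 => fibPal (k + 1) ++ fibTail (k + 4) ++ fibPal k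

lemma fibPal_add_two_swap (k : ℕ) :
    fibPal (k + 2) = fibPal k ++ fibTail (k + 3) ++ fibPal (k + 1) := by
  induction k with
  | zero => rfl
  | succ k ih =>
    calc fibPal (k + 3) = fibPal (k + 2) ++ fibTail (k + 3) ++ fibPal (k + 1) := by
          rw [fibPal, fibTail_add_two]
      _ = fibPal (k + 1) ++ fibTail (k + 4) ++ fibPal (k + 2) := by
          conv_rhs => rw [ih]
          simp only [fibPal, List.append_assoc]

lemma reverse_fibPal (k : ℕ) : (fibPal k).reverse = fibPal k := by
  induction k using Nat.twoStepInduction with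
  | zero => rfl
  | one => rfl
  | more k ih₀ ih₁ =>
    nth_rw 1 [fibPal_add_two_swap]
    simp only [fibPal, List.reverse_append, ih₀, ih₁, reverse_fibTail, List.append_assoc]

lemma fibWord_add_three_s19 (k : ℕ) : fibWord (k + 3) = fibPal k ++ fibTail (k + 3) := by
  induction k using Nat.twoStepInduction with
  | zero => rfl
  | one => rfl
  | more k ih₀ ih₁ =>
    rw [fibWord, ih₁, ih₀, fibPal, fibTail_add_two (k + 3)]
    simp only [List.append_assoc]

lemma reverse_fibWord_add_three_s19 (k : ℕ) :
    (fibWord (k + 3)).reverse = fibTail k ++ fibPal k := by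
  rw [fibWord_add_three_s19, List.reverse_append, reverse_fibTail, reverse_fibPal,
    fibTail_add_two, fibTail_add_two]

lemma fibWord_append_fibPal_append_fibTail (k : ℕ) :
    fibWord (k + 2) ++ fibPal k ++ fibTail (k + 2) = fibWord (k + 3) ++ fibWord (k + 2) := by
  cases k with
  | zero => rfl
  | succ k =>
    rw [fibWord_add_three_s19 k, fibWord_add_three_s19 (k + 1), ← fibPal_add_two_swap]
    simp only [fibPal, List.append_assoc]

def fibRevSquares (n : ℕ) : List ℕ :=
  ((List.range n).map fun i => (fibWord (i + 2)).reverse ++ (fibWord (i + 2)).reverse).flatten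

lemma fibRevSquares_succ (n : ℕ) :
    fibRevSquares (n + 1) =
      fibRevSquares n ++ ((fibWord (n + 2)).reverse ++ (fibWord (n + 2)).reverse) := by
  simp [fibRevSquares, List.range_succ]

lemma fibRevSquares_append_fibTail (k : ℕ) :
    [0, 1] ++ fibRevSquares (k + 1) ++ fibTail k = fibWord (k + 5) ++ fibWord (k + 2) := by
  induction k with
  | zero => rfl
  | succ k ih =>
    calc [0, 1] ++ fibRevSquares (k + 2) ++ fibTail (k + 1)
        = ([0, 1] ++ fibRevSquares (k + 1) ++ fibTail k) ++ fibPal k ++ fibTail k ++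
          (fibPal k ++ fibTail (k + 1)) := by
          rw [fibRevSquares_succ, reverse_fibWord_add_three_s19]
          simp only [List.append_assoc]
      _ = fibWord (k + 5) ++ (fibWord (k + 2) ++ fibPal k ++ fibTail (k + 2)) ++
          (fibPal k ++ fibTail (k + 1 + 2)) := by
          rw [ih, fibTail_add_two, fibTail_add_two]
          simp only [List.append_assoc]
      _ = fibWord (k + 6) ++ fibWord (k + 3) := by
        rw [fibWord_append_fibPal_append_fibTail, ← fibWord_add_three_s19]
        simp only [fibWord, List.append_assoc]

theorem stmt19 (N : ℕ) (hN : 2 ≤ N) :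
    IsFibPrefix ([0, 1] ++
      ((List.range (N - 1)).map
        (fun i => (fibWord (i + 2)).reverse ++ (fibWord (i + 2)).reverse)).flatten) := by
  obtain ⟨k, rfl⟩ : ∃ k, N = k + 2 := ⟨N - 2, by omega⟩
  refine ⟨k + 6, by omega, ?_⟩
  calc [0, 1] ++ fibRevSquares (k + 1)
      <+: fibWord (k + 5) ++ fibWord (k + 2) := ⟨_, fibRevSquares_append_fibTail k⟩
    _ <+: fibWord (k + 5) ++ fibWord (k + 2) ++ (fibWord (k + 1) ++ fibWord (k + 2)) :=
        List.prefix_append _ _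
    _ = fibWord (k + 6) := by simp only [fibWord, List.append_assoc]
end
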